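/- arXiv:2605.04961 — 2 statements merged into one kernel-verified Lean document; each statement's English description precedes it below -/
import Mathlib

section
/- Let Γ be an (m(p+1))×p real matrix and Σ an (m(p+1))×(m(p+1)) symmetric positive definite matrix such that Γ'Σ⁻¹Γ is invertible. For any p×(m(p+1)) matrix Λ with ΛΓ invertible, the matrix (ΛΓ)⁻¹(ΛΣΛ')((ΛΓ)⁻¹)' − (Γ'Σ⁻¹Γ)⁻¹ is positive semidefinite. -/
/-!
Write `G = Γᴴ S⁻¹ Γ` and `A = (ΛΓ)⁻¹Λ`, so that `A Γ = 1` and the sandwich variance is `A S Aᴴ`.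
The optimal weighting gives the left inverse `B = G⁻¹ Γᴴ S⁻¹` of `Γ`, and `S Bᴴ = Γ G⁻¹`; hence
every left inverse `X` of `Γ` has `X S Bᴴ = G⁻¹`. Expanding, the cross terms cancel and
`A S Aᴴ - G⁻¹ = (A - B) S (A - B)ᴴ`, which is positive semidefinite because `S` is.
-/

open Matrix

namespace Matrix

variable {n p R : Type*} [Fintype n] [Fintype p] [DecidableEq p]

theorem mul_mul_conjTranspose_sub_eq_of_mul_eq_one [Ring R] [StarRing R]
    {S : Matrix n n R} (hS : S.IsHermitian) {Γ : Matrix n p R} {V : Matrix p p R}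
    (hV : V.IsHermitian) {A B : Matrix p n R} (hA : A * Γ = 1) (hB : B * Γ = 1)
    (hSB : S * Bᴴ = Γ * V) :
    A * S * Aᴴ - V = (A - B) * S * (A - B)ᴴ := by
  have left_inverse_mul {X : Matrix p n R} (hX : X * Γ = 1) : X * S * Bᴴ = V := by
    rw [Matrix.mul_assoc, hSB, ← Matrix.mul_assoc, hX, Matrix.one_mul]
  have hBSA : B * S * Aᴴ = V := by
    rw [← hV.eq, ← left_inverse_mul hA, conjTranspose_mul, conjTranspose_mul,
      conjTranspose_conjTranspose, hS.eq, Matrix.mul_assoc]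
  rw [conjTranspose_sub, Matrix.sub_mul, Matrix.sub_mul, Matrix.mul_sub, Matrix.mul_sub,
    left_inverse_mul hA, left_inverse_mul hB, hBSA]
  abel

section CommRing

variable [CommRing R] [StarRing R] [DecidableEq n]

theorem inv_conjTranspose_mul_inv_mul_self {S : Matrix n n R} {Γ : Matrix n p R}
    (hG : IsUnit (Γᴴ * S⁻¹ * Γ)) :
    (Γᴴ * S⁻¹ * Γ)⁻¹ * Γᴴ * S⁻¹ * Γ = 1 := by
  rw [Matrix.mul_assoc _ Γᴴ, Matrix.mul_assoc,
    nonsing_inv_mul _ ((isUnit_iff_isUnit_det _).mp hG)]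

theorem mul_conjTranspose_inv_conjTranspose_mul_inv {S : Matrix n n R} (hS : S.IsHermitian)
    (hSu : IsUnit S) (Γ : Matrix n p R) :
    S * ((Γᴴ * S⁻¹ * Γ)⁻¹ * Γᴴ * S⁻¹)ᴴ = Γ * (Γᴴ * S⁻¹ * Γ)⁻¹ := by
  have hG : (Γᴴ * S⁻¹ * Γ)⁻¹.IsHermitian := (isHermitian_conjTranspose_mul_mul Γ hS.inv).inv
  rw [conjTranspose_mul, conjTranspose_mul, conjTranspose_conjTranspose, hS.inv.eq, hG.eq,
    ← Matrix.mul_assoc, ← Matrix.mul_assoc,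
    mul_nonsing_inv _ ((isUnit_iff_isUnit_det _).mp hSu), Matrix.one_mul]

end CommRing

theorem PosDef.posSemidef_mul_mul_conjTranspose_sub_inv [Field R] [PartialOrder R] [StarRing R]
    [StarOrderedRing R] [DecidableEq n] {S : Matrix n n R} (hS : S.PosDef) {Γ : Matrix n p R}
    (hG : IsUnit (Γᴴ * S⁻¹ * Γ)) {A : Matrix p n R} (hA : A * Γ = 1) :
    (A * S * Aᴴ - (Γᴴ * S⁻¹ * Γ)⁻¹).PosSemidef := by
  rw [mul_mul_conjTranspose_sub_eq_of_mul_eq_one hS.isHermitian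
    (isHermitian_conjTranspose_mul_mul Γ hS.isHermitian.inv).inv hA
    (inv_conjTranspose_mul_inv_mul_self hG)
    (mul_conjTranspose_inv_conjTranspose_mul_inv hS.isHermitian hS.isUnit Γ)]
  exact hS.posSemidef.mul_mul_conjTranspose_same _

end Matrix

theorem stmt0 (m p : ℕ)
    (Γ : Matrix (Fin (m * (p + 1))) (Fin p) ℝ)
    (S : Matrix (Fin (m * (p + 1))) (Fin (m * (p + 1))) ℝ)
    (hS : S.PosDef)
    (hinfo : IsUnit (Γᵀ * S⁻¹ * Γ))
    (Λ : Matrix (Fin p) (Fin (m * (p + 1))) ℝ)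
    (hΛΓ : IsUnit (Λ * Γ)) :
    ((Λ * Γ)⁻¹ * (Λ * S * Λᵀ) * ((Λ * Γ)⁻¹)ᵀ - (Γᵀ * S⁻¹ * Γ)⁻¹).PosSemidef := by
  have hA : (Λ * Γ)⁻¹ * Λ * Γ = 1 := by
    rw [Matrix.mul_assoc, nonsing_inv_mul _ ((isUnit_iff_isUnit_det _).mp hΛΓ)]
  have h := hS.posSemidef_mul_mul_conjTranspose_sub_inv (Γ := Γ) hinfo hA
  simp only [conjTranspose_eq_transpose_of_trivial, transpose_mul, Matrix.mul_assoc] at h ⊢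
  exact h
end

section
/- Let Σ₁₁ and Σ₁₁,₂ = Σ₁₁ − Σ₁₂Σ₂₂⁻¹Σ₂₁ come from a symmetric positive definite block matrix Σ (Σ₂₁ = Σ₁₂'), and let G be an m×p matrix such that both G'Σ₁₁⁻¹G and G'Σ₁₁,₂⁻¹G are invertible. Then (G'Σ₁₁⁻¹G)⁻¹ − (G'Σ₁₁,₂⁻¹G)⁻¹ is positive semidefinite. -/
/-!
The Schur complement `Σ₁₁,₂ = Σ₁₁ - Σ₁₂ Σ₂₂⁻¹ Σ₁₂ᵀ` of a positive definite block matrix is positive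
definite and lies below `Σ₁₁` in the Loewner order, the gap `Σ₁₂ Σ₂₂⁻¹ Σ₁₂ᵀ` being positive
semidefinite. Matrix inversion is antitone on positive definite matrices, so
`Σ₁₁⁻¹ ≤ Σ₁₁,₂⁻¹`; the congruence `X ↦ GᵀXG` preserves this, and inverting once more gives the claim.
-/

open Matrix

namespace Matrix

theorem PosDef.inv_sub_inv_posSemidef {n K : Type*} [Fintype n] [DecidableEq n] [Field K]
    [PartialOrder K] [StarRing K] [StarOrderedRing K] {A B : Matrix n n K} (hA : A.PosDef)
    (hAB : (B - A).PosSemidef) : (A⁻¹ - B⁻¹).PosSemidef := by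
  have hB : B.PosDef := by simpa using hA.add_posSemidef hAB
  have : Invertible A := hA.isUnit.invertible
  have : Invertible A⁻¹ := hA.inv.isUnit.invertible
  have : Invertible B := hB.isUnit.invertible
  -- `[[B, 1], [1, A⁻¹]]` is positive semidefinite iff either Schur complement, `B - A` or
  -- `A⁻¹ - B⁻¹`, is.
  have hblock : (fromBlocks B 1 1ᴴ A⁻¹).PosSemidef := by
    rw [PosDef.fromBlocks₂₂ _ _ hA.inv]
    simpa using hAB
  simpa using (PosDef.fromBlocks₁₁ _ _ hB).mp hblock

theorem PosDef.toBlocks₁₁ {m n R : Type*} [Ring R] [PartialOrder R] [StarRing R]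
    {M : Matrix (m ⊕ n) (m ⊕ n) R} (h : M.PosDef) : M.toBlocks₁₁.PosDef :=
  h.submatrix Sum.inl_injective

theorem PosDef.toBlocks₂₂ {m n R : Type*} [Ring R] [PartialOrder R] [StarRing R]
    {M : Matrix (m ⊕ n) (m ⊕ n) R} (h : M.PosDef) : M.toBlocks₂₂.PosDef :=
  h.submatrix Sum.inr_injective

open scoped ComplexOrder in
theorem PosDef.schur_complement_of_fromBlocks₂₂ {m n 𝕜 : Type*} [Fintype m] [Fintype n]
    [DecidableEq m] [DecidableEq n] [RCLike 𝕜] {A : Matrix m m 𝕜} {B : Matrix m n 𝕜}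
    {D : Matrix n n 𝕜} (h : (fromBlocks A B Bᴴ D).PosDef) : (A - B * D⁻¹ * Bᴴ).PosDef := by
  have hD : D.PosDef := by simpa using h.toBlocks₂₂
  have : Invertible D := hD.isUnit.invertible
  have hpsd := (PosDef.fromBlocks₂₂ A B hD).mp h.posSemidef
  refine hpsd.posDef_iff_det_ne_zero.mpr fun hdet => h.det_pos.ne' ?_
  rw [det_fromBlocks₂₂, invOf_eq_nonsing_inv, hdet, mul_zero]

end Matrix

theorem stmt9_general (m k p : ℕ)
    (G : Matrix (Fin m) (Fin p) ℝ)
    (S11 : Matrix (Fin m) (Fin m) ℝ) (S12 : Matrix (Fin m) (Fin k) ℝ)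
    (S21 : Matrix (Fin k) (Fin m) ℝ) (S22 : Matrix (Fin k) (Fin k) ℝ)
    (h21 : S21 = S12ᵀ)
    (hS : (Matrix.fromBlocks S11 S12 S21 S22).PosDef)
    (h1 : IsUnit (Gᵀ * S11⁻¹ * G)) :
    ((Gᵀ * S11⁻¹ * G)⁻¹ - (Gᵀ * (S11 - S12 * S22⁻¹ * S21)⁻¹ * G)⁻¹).PosSemidef := by
  subst h21
  simp only [← conjTranspose_eq_transpose_of_trivial] at hS h1 ⊢
  set Sc := S11 - S12 * S22⁻¹ * S12ᴴ with hSc_def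
  have hSc : Sc.PosDef := hS.schur_complement_of_fromBlocks₂₂
  have hS11 : S11.PosDef := by simpa using hS.toBlocks₁₁
  have hS22 : S22.PosDef := by simpa using hS.toBlocks₂₂
  have hgap : (S11 - Sc).PosSemidef := by
    rw [hSc_def, sub_sub_cancel]
    exact hS22.inv.posSemidef.mul_mul_conjTranspose_same S12
  have hGgap : (Gᴴ * Sc⁻¹ * G - Gᴴ * S11⁻¹ * G).PosSemidef := by
    simpa only [Matrix.mul_sub, Matrix.sub_mul] using
      (hSc.inv_sub_inv_posSemidef hgap).conjTranspose_mul_mul_same G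
  have hG11 : (Gᴴ * S11⁻¹ * G).PosDef :=
    (hS11.inv.posSemidef.conjTranspose_mul_mul_same G).posDef_iff_isUnit.mpr h1
  exact hG11.inv_sub_inv_posSemidef hGgap

theorem stmt9 (m k p : ℕ)
    (G : Matrix (Fin m) (Fin p) ℝ)
    (S11 : Matrix (Fin m) (Fin m) ℝ) (S12 : Matrix (Fin m) (Fin k) ℝ)
    (S21 : Matrix (Fin k) (Fin m) ℝ) (S22 : Matrix (Fin k) (Fin k) ℝ)
    (h21 : S21 = S12ᵀ)
    (hS : (Matrix.fromBlocks S11 S12 S21 S22).PosDef)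
    (h1 : IsUnit (Gᵀ * S11⁻¹ * G))
    (h2 : IsUnit (Gᵀ * (S11 - S12 * S22⁻¹ * S21)⁻¹ * G)) :
    ((Gᵀ * S11⁻¹ * G)⁻¹ - (Gᵀ * (S11 - S12 * S22⁻¹ * S21)⁻¹ * G)⁻¹).PosSemidef :=
  stmt9_general m k p G S11 S12 S21 S22 h21 hS h1
end
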